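/- arXiv:2407.11518 — 2 statements merged into one kernel-verified Lean document; each statement's English description precedes it below -/
import Mathlib

section
/- Let H be an RKHS with kernel k and feature map φ, and let F be the closed unit ball of H. For probability measures p, q with integrable feature maps, the squared maximum mean discrepancy MMD²[p,q;F] = (sup_{f∈F} (E_{x∼p}[f(x)] − E_{y∼q}[f(y)]))² equals E_{x,x'∼p}[k(x,x')] − 2E_{x∼p,y∼q}[k(x,y)] + E_{y,y'∼q}[k(y,y')], where x,x' are independent with law p and y,y' independent with law q. -/
open MeasureTheory
open scoped RealInnerProductSpace

lemma sup_inner_unit_ball {H : Type*} [NormedAddCommGroup H] [InnerProductSpace ℝ H]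
    (a : H) : (⨆ f : {f : H // ‖f‖ ≤ 1}, ⟪a, (f : H)⟫) = ‖a‖ := by
  haveI : Nonempty {f : H // ‖f‖ ≤ 1} := ⟨⟨0, by simp⟩⟩
  have hbdd : BddAbove (Set.range fun f : {f : H // ‖f‖ ≤ 1} => ⟪a, (f : H)⟫) := by
    refine ⟨‖a‖, ?_⟩
    rintro x ⟨f, rfl⟩
    calc ⟪a, (f : H)⟫ ≤ ‖a‖ * ‖(f : H)‖ := real_inner_le_norm a f
      _ ≤ ‖a‖ * 1 := by
          exact mul_le_mul_of_nonneg_left f.2 (norm_nonneg a)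
      _ = ‖a‖ := mul_one _
  apply le_antisymm
  · apply ciSup_le
    intro f
    calc ⟪a, (f : H)⟫ ≤ ‖a‖ * ‖(f : H)‖ := real_inner_le_norm a f
      _ ≤ ‖a‖ * 1 := mul_le_mul_of_nonneg_left f.2 (norm_nonneg a)
      _ = ‖a‖ := mul_one _
  · rcases eq_or_ne a 0 with rfl | ha
    · simp only [norm_zero]
      have : ⟪(0 : H), ((⟨0, by simp⟩ : {f : H // ‖f‖ ≤ 1}) : H)⟫ = 0 := by simp
      calc (0 : ℝ) = ⟪(0 : H), ((⟨0, by simp⟩ : {f : H // ‖f‖ ≤ 1}) : H)⟫ := this.symm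
        _ ≤ _ := le_ciSup hbdd _
    · have hna : 0 < ‖a‖ := norm_pos_iff.mpr ha
      have hmem : ‖(‖a‖⁻¹ • a)‖ ≤ 1 := by
        rw [norm_smul, norm_inv, norm_norm, inv_mul_cancel₀ hna.ne']
      have : ⟪a, ((⟨‖a‖⁻¹ • a, hmem⟩ : {f : H // ‖f‖ ≤ 1}) : H)⟫ = ‖a‖ := by
        simp only [real_inner_smul_right, real_inner_self_eq_norm_sq]
        field_simp
      calc ‖a‖ = _ := this.symm
        _ ≤ _ := le_ciSup hbdd _

/-- MMD² in kernel form: for an RKHS modelled by a feature map `φ` into a Hilbert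
space `H`, with `f x = ⟪φ x, f⟫` and kernel `k x x' = ⟪φ x, φ x'⟫`, the square of
`sup_{‖f‖ ≤ 1} (E_p[f] - E_q[f])` equals
`E_{p⊗p}[k] - 2 E_{p⊗q}[k] + E_{q⊗q}[k]`. -/
theorem stmt_1 {X : Type*} [MeasurableSpace X] {H : Type*} [NormedAddCommGroup H]
    [InnerProductSpace ℝ H] [CompleteSpace H]
    (φ : X → H) (p q : Measure X) [IsProbabilityMeasure p] [IsProbabilityMeasure q]
    (hp : Integrable φ p) (hq : Integrable φ q) :
    (⨆ f : {f : H // ‖f‖ ≤ 1}, (∫ x, ⟪φ x, (f : H)⟫ ∂p - ∫ y, ⟪φ y, (f : H)⟫ ∂q)) ^ 2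
      = ∫ x, ∫ x', ⟪φ x, φ x'⟫ ∂p ∂p
        - 2 * ∫ x, ∫ y, ⟪φ x, φ y⟫ ∂q ∂p
        + ∫ y, ∫ y', ⟪φ y, φ y'⟫ ∂q ∂q := by
  set μp := ∫ x, φ x ∂p with hμp
  set μq := ∫ y, φ y ∂q with hμq
  have key : ∀ (f : H), (∫ x, ⟪φ x, f⟫ ∂p - ∫ y, ⟪φ y, f⟫ ∂q) = ⟪μp - μq, f⟫ := by
    intro f
    have h1 : ∫ x, ⟪φ x, f⟫ ∂p = ⟪μp, f⟫ := by
      have h : (fun x => ⟪φ x, f⟫) = fun x => ⟪f, φ x⟫ := funext fun x => real_inner_comm _ _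
      rw [h, integral_inner hp f, real_inner_comm]
    have h2 : ∫ y, ⟪φ y, f⟫ ∂q = ⟪μq, f⟫ := by
      have h : (fun y => ⟪φ y, f⟫) = fun y => ⟪f, φ y⟫ := funext fun y => real_inner_comm _ _
      rw [h, integral_inner hq f, real_inner_comm]
    rw [h1, h2, ← inner_sub_left]
  have hsup : (⨆ f : {f : H // ‖f‖ ≤ 1},
      (∫ x, ⟪φ x, (f : H)⟫ ∂p - ∫ y, ⟪φ y, (f : H)⟫ ∂q)) = ‖μp - μq‖ := by
    rw [show (fun f : {f : H // ‖f‖ ≤ 1} =>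
        (∫ x, ⟪φ x, (f : H)⟫ ∂p - ∫ y, ⟪φ y, (f : H)⟫ ∂q)) =
        fun f : {f : H // ‖f‖ ≤ 1} => ⟪μp - μq, (f : H)⟫ from funext fun f => key f]
    exact sup_inner_unit_ball _
  have e1 : ∫ x, ∫ x', ⟪φ x, φ x'⟫ ∂p ∂p = ⟪μp, μp⟫ := by
    have : ∀ x, ∫ x', ⟪φ x, φ x'⟫ ∂p = ⟪μp, φ x⟫ := fun x => by
      rw [integral_inner hp (φ x), real_inner_comm]
    simp_rw [this, integral_inner hp μp]
    rfl
  have e2 : ∫ x, ∫ y, ⟪φ x, φ y⟫ ∂q ∂p = ⟪μp, μq⟫ := by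
    have : ∀ x, ∫ y, ⟪φ x, φ y⟫ ∂q = ⟪μq, φ x⟫ := fun x => by
      rw [integral_inner hq (φ x), real_inner_comm]
    simp_rw [this, integral_inner hp μq, real_inner_comm]
    rfl
  have e3 : ∫ y, ∫ y', ⟪φ y, φ y'⟫ ∂q ∂q = ⟪μq, μq⟫ := by
    have : ∀ y, ∫ y', ⟪φ y, φ y'⟫ ∂q = ⟪μq, φ y⟫ := fun y => by
      rw [integral_inner hq (φ y), real_inner_comm]
    simp_rw [this, integral_inner hq μq]
    rfl
  rw [hsup, e1, e2, e3, ← real_inner_self_eq_norm_sq, real_inner_sub_sub_self]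
end

section
/- Let p, q be probability measures on a compact metric space Ω and H an RKHS on Ω with a universal kernel (i.e., H is dense in C(Ω) in the uniform norm). If the unit-ball MMD satisfies MMD[p,q;F] = 0, where F is the unit ball of H, then p = q. -/
open MeasureTheory

/-- Universality implies that MMD separates measures: if the RKHS `H` embeds
continuously and densely (universal kernel) into `C(Ω)` on a compact metric space
`Ω`, and the unit-ball MMD between Borel probability measures `p` and `q` vanishes,
then `p = q`. -/
theorem stmt_11 {Ω : Type*} [MetricSpace Ω] [CompactSpace Ω] [MeasurableSpace Ω]
    [BorelSpace Ω] {H : Type*} [NormedAddCommGroup H] [InnerProductSpace ℝ H]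
    (J : H →L[ℝ] C(Ω, ℝ)) (hdense : DenseRange J)
    (p q : Measure Ω) [IsProbabilityMeasure p] [IsProbabilityMeasure q]
    (hMMD : (⨆ f : {f : H // ‖f‖ ≤ 1}, (∫ x, J (f : H) x ∂p - ∫ x, J (f : H) x ∂q)) = 0) :
    p = q := by
  have hint : ∀ (g : C(Ω, ℝ)) (μ : Measure Ω) [IsProbabilityMeasure μ], Integrable g μ :=
    fun g μ _ => (BoundedContinuousFunction.mkOfCompact g).integrable μ
  -- bound: for probability μ, |∫ g dμ| ≤ ‖g‖
  have hbound : ∀ (g : C(Ω, ℝ)) (μ : Measure Ω) [IsProbabilityMeasure μ],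
      ‖∫ x, g x ∂μ‖ ≤ ‖g‖ := by
    intro g μ _
    calc ‖∫ x, g x ∂μ‖ ≤ ‖g‖ * (μ Set.univ).toReal := by
          apply norm_integral_le_of_norm_le_const
          exact Filter.Eventually.of_forall fun x => g.norm_coe_le_norm x
      _ = ‖g‖ := by simp
  -- BddAbove of the range
  have hbdd : BddAbove (Set.range fun f : {f : H // ‖f‖ ≤ 1} =>
      (∫ x, J (f : H) x ∂p - ∫ x, J (f : H) x ∂q)) := by
    refine ⟨2 * ‖J‖, ?_⟩
    rintro _ ⟨f, rfl⟩
    have hJ : ‖J (f : H)‖ ≤ ‖J‖ := J.unit_le_opNorm (f : H) f.2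
    have h1 := hbound (J (f : H)) p
    have h2 := hbound (J (f : H)) q
    calc (∫ x, J (f : H) x ∂p - ∫ x, J (f : H) x ∂q)
        ≤ ‖∫ x, J (f : H) x ∂p‖ + ‖∫ x, J (f : H) x ∂q‖ :=
          (le_abs_self _).trans (abs_sub _ _)
      _ ≤ ‖J‖ + ‖J‖ := add_le_add (h1.trans hJ) (h2.trans hJ)
      _ = 2 * ‖J‖ := by ring
  -- each term ≤ 0
  have hle : ∀ f : H, ‖f‖ ≤ 1 → (∫ x, J f x ∂p - ∫ x, J f x ∂q) ≤ 0 := by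
    intro f hf
    have := le_ciSup hbdd (⟨f, hf⟩ : {f : H // ‖f‖ ≤ 1})
    simpa [hMMD] using this
  -- equality on unit ball
  have heq1 : ∀ f : H, ‖f‖ ≤ 1 → ∫ x, J f x ∂p = ∫ x, J f x ∂q := by
    intro f hf
    have h1 := hle f hf
    have h2 := hle (-f) (by simpa using hf)
    have hneg : ∀ μ : Measure Ω, ∫ x, J (-f) x ∂μ = -∫ x, J f x ∂μ := by
      intro μ
      simp only [map_neg]
      rw [← integral_neg]
      rfl
    rw [hneg p, hneg q] at h2
    linarith
  -- equality for all f
  have heq : ∀ f : H, ∫ x, J f x ∂p = ∫ x, J f x ∂q := by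
    intro f
    rcases eq_or_ne f 0 with rfl | hf0
    · simp
    · have hn : (0:ℝ) < ‖f‖ := norm_pos_iff.mpr hf0
      have := heq1 (‖f‖⁻¹ • f) (by
        rw [norm_smul]; simp [abs_of_pos hn, inv_mul_cancel₀ hn.ne'])
      have hsmul : ∀ μ : Measure Ω, ∫ x, J (‖f‖⁻¹ • f) x ∂μ = ‖f‖⁻¹ * ∫ x, J f x ∂μ := by
        intro μ
        simp only [_root_.map_smul, ContinuousMap.smul_apply, smul_eq_mul]
        rw [integral_const_mul]
      rw [hsmul p, hsmul q] at this
      exact mul_left_cancel₀ (by positivity) this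
  -- extend to all continuous g by density
  have hgeq : ∀ g : C(Ω, ℝ), ∫ x, g x ∂p = ∫ x, g x ∂q := by
    have hcont : ∀ (μ : Measure Ω) [IsProbabilityMeasure μ],
        Continuous fun g : C(Ω, ℝ) => ∫ x, g x ∂μ := by
      intro μ _
      refine (LipschitzWith.mk_one fun g g' => ?_).continuous
      rw [dist_eq_norm, dist_eq_norm, ← integral_sub (hint g μ) (hint g' μ)]
      exact hbound (g - g') μ
    intro g
    refine hdense.induction_on g ?_ heq
    exact isClosed_eq (hcont p) (hcont q)
  -- conclude measures equal via lintegral of bounded continuous ℝ≥0 functions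
  apply ext_of_forall_lintegral_eq_of_IsFiniteMeasure
  intro f
  have hfc : Continuous fun x => (f x : ℝ) := NNReal.continuous_coe.comp f.continuous
  have hflift : ∀ (μ : Measure Ω) [IsProbabilityMeasure μ],
      ∫⁻ x, f x ∂μ = ENNReal.ofReal (∫ x, (f x : ℝ) ∂μ) := by
    intro μ _
    exact lintegral_coe_eq_integral (fun x => f x)
      (hint ⟨fun x => (f x : ℝ), hfc⟩ μ)
  rw [hflift p, hflift q]
  exact congrArg ENNReal.ofReal (hgeq ⟨fun x => (f x : ℝ), hfc⟩)
end
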